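/- arXiv:0710.3894 — 3 statements merged into one kernel-verified Lean document; each statement's English description precedes it below -/
import Mathlib

section
/- Fix n ≥ 1 and constants C, c > 0. Suppose T_N (N ∈ ℕ) are trace-class operators on a Hilbert space satisfying ‖T_N‖ ≤ e^{CN} and μ_k(T_N) ≤ e^{CN - c k^{1/n}} for all k ≥ 1. Then there is a constant C' (depending only on n, C, c) such that |det(I + T_N)| ≤ e^{C' N^{n+1}} for all sufficiently large N. -/
/-!
Weyl's inequality reduces the claim to `∑ₖ log (1 + μₖ) = O(N^{n+1})`. Split the sum at
`M ≈ (2CN/c)^n`: each of the first `M` terms is at most `log (1 + e^{CN}) ≤ CN + 1`, while for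
`k ≥ M` the decay `e^{-c k^{1/n}}` beats `e^{CN}` by half, so the tail is dominated by the
`N`-independent convergent series `∑ₖ e^{-(c/2) k^{1/n}}`.
-/

open Real Filter

lemma summable_exp_neg_mul_rpow {b p : ℝ} (hb : 0 < b) (hp : 0 < p) :
    Summable fun k : ℕ => exp (-(b * (k : ℝ) ^ p)) := by
  have hlim : Tendsto (fun k : ℕ => (k : ℝ) ^ p) atTop atTop :=
    (tendsto_rpow_atTop hp).comp tendsto_natCast_atTop_atTop
  have hdecay := (isLittleO_exp_neg_mul_rpow_atTop hb (-2 / p)).comp_tendsto hlim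
  refine summable_of_isBigO_nat (Real.summable_nat_rpow.mpr (by norm_num : (-2 : ℝ) < -1)) ?_
  refine (hdecay.isBigO.congr_left fun k => by simp [Function.comp, neg_mul]).congr_right
    fun k => ?_
  rw [Function.comp_apply, ← rpow_mul (Nat.cast_nonneg k), mul_div_cancel₀ _ hp.ne']

lemma log_one_add_le_of_le_exp {x t : ℝ} (hx : 0 ≤ x) (ht : 0 ≤ t) (hxt : x ≤ exp t) :
    log (1 + x) ≤ t + 1 := by
  rw [log_le_iff_le_exp (by linarith), exp_add]
  nlinarith [add_one_le_exp 1, one_le_exp ht]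

lemma tprod_one_add_le_exp {a : ℕ → ℝ} (ha : ∀ k, 0 ≤ a k) (hs : Summable a) (M : ℕ) {L : ℝ}
    (hL : ∀ k < M, log (1 + a k) ≤ L) :
    ∏' k, (1 + a k) ≤ exp (M * L + ∑' k, a (k + M)) := by
  have hlog := Real.summable_log_one_add_of_summable hs
  rw [← Real.rexp_tsum_eq_tprod (fun k => by linarith [ha k]) hlog,
    ← hlog.sum_add_tsum_nat_add M]
  gcongr exp (?_ + ?_)
  · simpa using Finset.sum_le_card_nsmul _ _ L fun k hk => hL k (Finset.mem_range.mp hk)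
  · refine Summable.tsum_le_tsum (fun k => ?_) ((summable_nat_add_iff M).mpr hlog)
      ((summable_nat_add_iff M).mpr hs)
    linarith [log_le_sub_one_of_pos (by linarith [ha (k + M)] : 0 < 1 + a (k + M))]

lemma exp_sub_mul_rpow_inv_le_exp_neg_half {n : ℕ} (hn : n ≠ 0) {c t k m : ℝ} (hc : 0 < c)
    (ht : 0 ≤ t) (hk : 0 ≤ k) (hkm : k ≤ m) (hm : (2 * t / c) ^ n ≤ m) :
    exp (t - c * m ^ (n : ℝ)⁻¹) ≤ exp (-(c / 2 * k ^ (n : ℝ)⁻¹)) := by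
  have htm : 2 * t / c ≤ m ^ (n : ℝ)⁻¹ :=
    (le_rpow_inv_iff_of_pos (by positivity) (hk.trans hkm) (by positivity)).mpr
      (by rwa [rpow_natCast])
  have hkm' : k ^ (n : ℝ)⁻¹ ≤ m ^ (n : ℝ)⁻¹ := by gcongr
  have ht' : t = c / 2 * (2 * t / c) := by field_simp
  gcongr
  nlinarith

lemma tprod_one_add_le_of_le_exp_sub_mul_rpow_inv {n : ℕ} (hn : n ≠ 0) {c t : ℝ} (hc : 0 < c)
    (ht : 0 ≤ t) {a : ℕ → ℝ} (ha : ∀ k, 0 ≤ a k)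
    (hdecay : ∀ k, a k ≤ exp (t - c * ((k + 1 : ℕ) : ℝ) ^ (n : ℝ)⁻¹))
    (M : ℕ) (hM : (2 * t / c) ^ n ≤ M) :
    ∏' k, (1 + a k) ≤ exp (M * (t + 1) + ∑' k : ℕ, exp (-(c / 2 * (k : ℝ) ^ (n : ℝ)⁻¹))) := by
  set g : ℕ → ℝ := fun k => exp (-(c / 2 * (k : ℝ) ^ (n : ℝ)⁻¹))
  have hg : Summable g := summable_exp_neg_mul_rpow (half_pos hc) (by positivity)
  have hhead (k : ℕ) : log (1 + a k) ≤ t + 1 := by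
    refine log_one_add_le_of_le_exp (ha k) ht ((hdecay k).trans ?_)
    gcongr
    linarith [show 0 ≤ c * ((k + 1 : ℕ) : ℝ) ^ (n : ℝ)⁻¹ by positivity]
  have htail (k : ℕ) : a (k + M) ≤ g k :=
    (hdecay (k + M)).trans <| exp_sub_mul_rpow_inv_le_exp_neg_half hn hc ht
      (Nat.cast_nonneg k) (by push_cast; linarith) (hM.trans (by push_cast; linarith))
  have hsum : Summable a := (summable_nat_add_iff M).mp (hg.of_nonneg_of_le (fun k => ha _) htail)
  calc ∏' k, (1 + a k) ≤ exp (M * (t + 1) + ∑' k, a (k + M)) :=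
        tprod_one_add_le_exp ha hsum M fun k _ => hhead k
    _ ≤ exp (M * (t + 1) + ∑' k, g k) := by
        have htail_sum := ((summable_nat_add_iff M).mpr hsum).tsum_le_tsum htail hg
        gcongr exp (_ + ?_)

theorem stmt8_general (n : ℕ) (hn : 1 ≤ n) (C c : ℝ) (hC : 0 < C) (hc : 0 < c)
    (μ : ℕ → ℕ → ℝ) (hpos : ∀ N k, 0 ≤ μ N k)
    (hsing : ∀ N : ℕ, ∀ k : ℕ, 1 ≤ k →
      μ N k ≤ Real.exp (C * N - c * (k : ℝ) ^ ((n : ℝ)⁻¹)))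
    (D : ℕ → ℝ) (hweyl : ∀ N, |D N| ≤ ∏' k : ℕ, (1 + μ N (k + 1))) :
    ∃ C' : ℝ, ∃ N₀ : ℕ, ∀ N : ℕ, N₀ ≤ N →
      |D N| ≤ Real.exp (C' * (N : ℝ) ^ (n + 1)) := by
  set S : ℝ := ∑' k : ℕ, exp (-(c / 2 * (k : ℝ) ^ (n : ℝ)⁻¹))
  set A : ℕ := ⌈(2 * C / c) ^ n⌉₊
  refine ⟨A * (C + 1) + S, 1, fun N hN => ?_⟩
  have hM : (2 * (C * N) / c) ^ n ≤ (A * N ^ n : ℕ) := by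
    calc (2 * (C * N) / c) ^ n = (2 * C / c) ^ n * (N : ℝ) ^ n := by rw [← mul_pow]; ring
      _ ≤ (A * N ^ n : ℕ) := by push_cast; gcongr; exact Nat.le_ceil _
  have hS : 0 ≤ S := tsum_nonneg fun k => (exp_pos _).le
  have hN1 : (1 : ℝ) ≤ N := by exact_mod_cast hN
  have hpow : (N : ℝ) ^ n ≤ (N : ℝ) ^ (n + 1) := pow_le_pow_right₀ hN1 n.le_succ
  calc |D N| ≤ ∏' k, (1 + μ N (k + 1)) := hweyl N
    _ ≤ exp ((A * N ^ n : ℕ) * (C * N + 1) + S) :=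
      tprod_one_add_le_of_le_exp_sub_mul_rpow_inv (by omega) hc (by positivity)
        (fun k => hpos N (k + 1)) (fun k => hsing N (k + 1) (by omega)) _ hM
    _ ≤ exp ((A * (C + 1) + S) * (N : ℝ) ^ (n + 1)) := by
      gcongr
      push_cast
      rw [pow_succ] at hpow ⊢
      nlinarith [one_le_pow₀ (n := n) hN1, (Nat.cast_nonneg A : (0 : ℝ) ≤ A)]

/-- Fix `n ≥ 1` and `C, c > 0`.  If `T_N` are trace-class operators whose
singular values `μ N k` (for `k ≥ 1`) satisfy `μ N k ≤ e^{CN}` (operator-norm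
bound) and `μ N k ≤ e^{CN - c k^{1/n}}`, and `D N = det(I + T_N)` satisfies
Weyl's inequality `|D N| ≤ ∏_{k ≥ 1}(1 + μ N k)`, then there is `C'` with
`|det(I + T_N)| ≤ e^{C' N^{n+1}}` for all sufficiently large `N`. -/
theorem stmt8 (n : ℕ) (hn : 1 ≤ n) (C c : ℝ) (hC : 0 < C) (hc : 0 < c)
    (μ : ℕ → ℕ → ℝ) (hpos : ∀ N k, 0 ≤ μ N k)
    (hnorm : ∀ N k, μ N k ≤ Real.exp (C * N))
    (hsing : ∀ N : ℕ, ∀ k : ℕ, 1 ≤ k →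
      μ N k ≤ Real.exp (C * N - c * (k : ℝ) ^ ((n : ℝ)⁻¹)))
    (D : ℕ → ℝ) (hweyl : ∀ N, |D N| ≤ ∏' k : ℕ, (1 + μ N (k + 1))) :
    ∃ C' : ℝ, ∃ N₀ : ℕ, ∀ N : ℕ, N₀ ≤ N →
      |D N| ≤ Real.exp (C' * (N : ℝ) ^ (n + 1)) :=
  stmt8_general n hn C c hC hc μ hpos hsing D hweyl
end

section
/- Let R ⊂ ℂ be a multiset (a set with multiplicities) with counting function N(r) := #{ζ ∈ R : |ζ| ≤ r} satisfying N(r) ≤ C r^{n+1} for all r ≥ 1, where n ≥ 1 and C > 0. Suppose there exist constants c₀ > 0 and λ₀ ≥ 1 such that ∑_{ζ ∈ R} (1 + |ζ|/λ)^{-(n+2)} ≥ c₀ λ^{n+1} for all λ ≥ λ₀. Then there exist c' > 0 and r₀ such that N(r) ≥ c' r^{n+1} for all r ≥ r₀. -/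
/-!
Split the sum at `|ζ| = Aλ`. The terms with `|ζ| ≤ Aλ` are at most `1`, so together they are at
most `N(Aλ)`. The remaining points lie in dyadic shells `2ᵏAλ ≤ |ζ| < 2ᵏ⁺¹Aλ`; the upper bound on
`N` at `2ᵏ⁺¹Aλ` and the bound `(|ζ|/λ)^{-(n+2)}` on each term make shell `k` contribute at most
`2ⁿ⁺¹Cλⁿ⁺¹/(A 2ᵏ)`, hence all of them at most `2ⁿ⁺²Cλⁿ⁺¹/A`. Taking `A` large, this is at most
half of `c₀λⁿ⁺¹`, so `N(Aλ) ≥ c₀λⁿ⁺¹/2`, and `r = Aλ` gives the claim. The dyadic shells replace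
the Stieltjes integration by parts.
-/

open Finset

section

variable {ι : Type*} (a : ι → ℝ)

theorem card_le_ncard_setOf_le {r : ℝ} (hfin : {j | a j ≤ r}.Finite) {t : Finset ι}
    (ht : ∀ j ∈ t, a j ≤ r) : t.card ≤ {j | a j ≤ r}.ncard := by
  rw [← Set.ncard_coe_finset]
  exact Set.ncard_le_ncard ht hfin

theorem sum_inv_pow_le_of_ncard_le {m : ℕ} {C R : ℝ} (hR : 0 < R)
    (hfin : ∀ r, {j | a j ≤ r}.Finite)
    (hupper : ∀ r, R ≤ r → ({j | a j ≤ r}.ncard : ℝ) ≤ C * r ^ m)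
    {s : Finset ι} (hs : ∀ j ∈ s, R ≤ a j) :
    ∑ j ∈ s, (a j ^ (m + 1))⁻¹ ≤ 2 ^ (m + 1) * C / R := by
  have hC : 0 ≤ C := nonneg_of_mul_nonneg_left ((Nat.cast_nonneg _).trans (hupper R le_rfl))
    (by positivity)
  have hshell : ∀ j ∈ s, ∃ k : ℕ, 2 ^ k * R ≤ a j ∧ a j < 2 ^ (k + 1) * R := by
    intro j hj
    obtain ⟨k, hk⟩ := exists_nat_pow_near ((one_le_div hR).2 (hs j hj)) one_lt_two
    exact ⟨k, (le_div_iff₀ hR).1 hk.1, (div_lt_iff₀ hR).1 hk.2⟩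
  choose! k hk using hshell
  have hmaps : ∀ j ∈ s, k j ∈ range (s.sup k + 1) :=
    fun j hj => mem_range.2 (Nat.lt_succ_of_le (le_sup hj))
  have hfiber : ∀ i ∈ range (s.sup k + 1), ∑ j ∈ s with k j = i, (a j ^ (m + 1))⁻¹
      ≤ 2 ^ m * C / R * (1 / 2) ^ i := by
    intro i _
    calc ∑ j ∈ s with k j = i, (a j ^ (m + 1))⁻¹
        ≤ ∑ j ∈ s with k j = i, ((2 ^ i * R) ^ (m + 1))⁻¹ := by
          refine sum_le_sum fun j hj => ?_
          obtain ⟨hjs, rfl⟩ := mem_filter.1 hj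
          gcongr
          exact (hk j hjs).1
      _ = (#{j ∈ s | k j = i} : ℝ) * ((2 ^ i * R) ^ (m + 1))⁻¹ := by
          rw [sum_const, nsmul_eq_mul]
      _ ≤ C * (2 ^ (i + 1) * R) ^ m * ((2 ^ i * R) ^ (m + 1))⁻¹ := by
          gcongr
          refine le_trans ?_ (hupper _ (le_mul_of_one_le_left hR.le (one_le_pow₀ one_le_two)))
          refine Nat.cast_le.2 (card_le_ncard_setOf_le a (hfin _) fun j hj => ?_)
          obtain ⟨hjs, rfl⟩ := mem_filter.1 hj
          exact (hk j hjs).2.le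
      _ = 2 ^ m * C / R * (1 / 2) ^ i := by
          rw [one_div, inv_pow]
          field_simp
          ring
  calc ∑ j ∈ s, (a j ^ (m + 1))⁻¹
      = ∑ i ∈ range (s.sup k + 1), ∑ j ∈ s with k j = i, (a j ^ (m + 1))⁻¹ :=
        (sum_fiberwise_of_maps_to hmaps _).symm
    _ ≤ ∑ i ∈ range (s.sup k + 1), 2 ^ m * C / R * (1 / 2) ^ i := sum_le_sum hfiber
    _ ≤ 2 ^ m * C / R * 2 := by
        rw [← mul_sum]
        gcongr
        exact sum_geometric_two_le _
    _ = 2 ^ (m + 1) * C / R := by ring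

theorem tsum_inv_one_add_div_pow_le {m : ℕ} {C R lam : ℝ} (ha : ∀ j, 0 ≤ a j) (hR : 0 < R)
    (hlam : 0 < lam) (hfin : ∀ r, {j | a j ≤ r}.Finite)
    (hupper : ∀ r, R ≤ r → ({j | a j ≤ r}.ncard : ℝ) ≤ C * r ^ m) :
    ∑' j, ((1 + a j / lam) ^ (m + 1))⁻¹
      ≤ {j | a j ≤ R}.ncard + lam ^ (m + 1) * (2 ^ (m + 1) * C / R) := by
  have hpartial : ∀ s : Finset ι, ∑ j ∈ s, ((1 + a j / lam) ^ (m + 1))⁻¹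
      ≤ {j | a j ≤ R}.ncard + lam ^ (m + 1) * (2 ^ (m + 1) * C / R) := by
    intro s
    rw [← sum_filter_add_sum_filter_not s (fun j => a j ≤ R)]
    gcongr
    · calc ∑ j ∈ s with a j ≤ R, ((1 + a j / lam) ^ (m + 1))⁻¹
          ≤ ∑ j ∈ s with a j ≤ R, (1 : ℝ) :=
            sum_le_sum fun j _ => inv_le_one_of_one_le₀
              (one_le_pow₀ (le_add_of_nonneg_right (div_nonneg (ha j) hlam.le)))
        _ ≤ {j | a j ≤ R}.ncard := by
            rw [sum_const, nsmul_one]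
            exact Nat.cast_le.2
              (card_le_ncard_setOf_le a (hfin R) fun j hj => (mem_filter.1 hj).2)
    · calc ∑ j ∈ s with ¬a j ≤ R, ((1 + a j / lam) ^ (m + 1))⁻¹
          ≤ ∑ j ∈ s with ¬a j ≤ R, lam ^ (m + 1) * (a j ^ (m + 1))⁻¹ := by
            refine sum_le_sum fun j hj => ?_
            have hpos : 0 < a j / lam := div_pos (hR.trans (not_le.1 (mem_filter.1 hj).2)) hlam
            calc ((1 + a j / lam) ^ (m + 1))⁻¹ ≤ ((a j / lam) ^ (m + 1))⁻¹ := by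
                  gcongr
                  exact le_add_of_nonneg_left zero_le_one
              _ = lam ^ (m + 1) * (a j ^ (m + 1))⁻¹ := by rw [div_pow, inv_div, div_eq_mul_inv]
        _ ≤ lam ^ (m + 1) * (2 ^ (m + 1) * C / R) := by
            rw [← mul_sum]
            gcongr
            exact sum_inv_pow_le_of_ncard_le a hR hfin hupper
              fun j hj => (not_le.1 (mem_filter.1 hj).2).le
  exact tsum_le_of_sum_le' (by simpa using hpartial ∅) hpartial

theorem exists_mul_pow_le_ncard_of_tsum_ge {m : ℕ} {C c₀ lam₀ : ℝ} (ha : ∀ j, 0 ≤ a j)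
    (hfin : ∀ r, {j | a j ≤ r}.Finite)
    (hupper : ∀ r, 1 ≤ r → ({j | a j ≤ r}.ncard : ℝ) ≤ C * r ^ m)
    (hc₀ : 0 < c₀) (hlam₀ : 1 ≤ lam₀)
    (hlower : ∀ lam, lam₀ ≤ lam → c₀ * lam ^ m ≤ ∑' j, ((1 + a j / lam) ^ (m + 1))⁻¹) :
    ∃ c' > (0 : ℝ), ∃ r₀ : ℝ, ∀ r, r₀ ≤ r → c' * r ^ m ≤ {j | a j ≤ r}.ncard := by
  -- `A` is chosen so that the points with `a j > A * lam` contribute at most `c₀ / 2 * lam ^ m`.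
  set A : ℝ := max 1 (2 ^ (m + 2) * C / c₀)
  have hA : 1 ≤ A := le_max_left _ _
  have hA₀ : 0 < A := one_pos.trans_le hA
  have htail : 2 ^ (m + 1) * C / A ≤ c₀ / 2 := by
    have hA' : 2 ^ (m + 2) * C / c₀ ≤ A := le_max_right _ _
    rw [div_le_iff₀ hc₀, pow_succ] at hA'
    rw [div_le_iff₀ hA₀]
    linarith
  have hdilated : ∀ lam, lam₀ ≤ lam → c₀ / 2 * lam ^ m ≤ {j | a j ≤ A * lam}.ncard := by
    intro lam hlam
    have hlam₁ : 1 ≤ lam := hlam₀.trans hlam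
    have hlam_pos : 0 < lam := one_pos.trans_le hlam₁
    have hAlam : 1 ≤ A * lam := one_le_mul_of_one_le_of_one_le hA hlam₁
    have hsum := (hlower lam hlam).trans (tsum_inv_one_add_div_pow_le a ha
      (one_pos.trans_le hAlam) hlam_pos hfin fun r hr => hupper r (hAlam.trans hr))
    have hrescale : lam ^ (m + 1) * (2 ^ (m + 1) * C / (A * lam))
        = 2 ^ (m + 1) * C / A * lam ^ m := by
      field_simp
      ring
    rw [hrescale] at hsum
    have := mul_le_mul_of_nonneg_right htail (pow_pos hlam_pos m).le
    linarith
  refine ⟨c₀ / 2 / A ^ m, by positivity, A * lam₀, fun r hr => ?_⟩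
  have h := hdilated (r / A) ((le_div_iff₀ hA₀).2 (by linarith))
  rw [mul_div_cancel₀ r hA₀.ne'] at h
  calc c₀ / 2 / A ^ m * r ^ m = c₀ / 2 * (r / A) ^ m := by rw [div_pow]; ring
    _ ≤ _ := h

end

theorem stmt9_general (n : ℕ) (C : ℝ) (ζ : ℕ → ℂ)
    (hfin : ∀ r : ℝ, {j : ℕ | ‖ζ j‖ ≤ r}.Finite)
    (hupper : ∀ r : ℝ, 1 ≤ r →
      ({j : ℕ | ‖ζ j‖ ≤ r}.ncard : ℝ) ≤ C * r ^ (n + 1))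
    (c₀ lam₀ : ℝ) (hc₀ : 0 < c₀) (hlam₀ : 1 ≤ lam₀)
    (hlower : ∀ lam : ℝ, lam₀ ≤ lam →
      c₀ * lam ^ (n + 1) ≤ ∑' j : ℕ, ((1 + ‖ζ j‖ / lam) ^ (n + 2))⁻¹) :
    ∃ c' > (0 : ℝ), ∃ r₀ : ℝ, ∀ r : ℝ, r₀ ≤ r →
      c' * r ^ (n + 1) ≤ ({j : ℕ | ‖ζ j‖ ≤ r}.ncard : ℝ) :=
  exists_mul_pow_le_ncard_of_tsum_ge (fun j => ‖ζ j‖) (fun _ => norm_nonneg _) hfin hupper hc₀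
    hlam₀ hlower

/-- Tauberian step: if a (multi)set of complex numbers, listed with multiplicity by a
sequence `ζ`, has counting function `N(r) = #{j : |ζ j| ≤ r}` finite and `≤ C r^{n+1}`
for `r ≥ 1`, and if `∑_j (1 + |ζ j|/λ)^{-(n+2)} ≥ c₀ λ^{n+1}` for all `λ ≥ λ₀`, then
`N(r) ≥ c' r^{n+1}` for all large `r`. -/
theorem stmt9 (n : ℕ) (hn : 1 ≤ n) (C : ℝ) (hC : 0 < C) (ζ : ℕ → ℂ)
    (hfin : ∀ r : ℝ, {j : ℕ | ‖ζ j‖ ≤ r}.Finite)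
    (hupper : ∀ r : ℝ, 1 ≤ r →
      ({j : ℕ | ‖ζ j‖ ≤ r}.ncard : ℝ) ≤ C * r ^ (n + 1))
    (c₀ lam₀ : ℝ) (hc₀ : 0 < c₀) (hlam₀ : 1 ≤ lam₀)
    (hlower : ∀ lam : ℝ, lam₀ ≤ lam →
      c₀ * lam ^ (n + 1) ≤ ∑' j : ℕ, ((1 + ‖ζ j‖ / lam) ^ (n + 2))⁻¹) :
    ∃ c' > (0 : ℝ), ∃ r₀ : ℝ, ∀ r : ℝ, r₀ ≤ r →
      c' * r ^ (n + 1) ≤ ({j : ℕ | ‖ζ j‖ ≤ r}.ncard : ℝ) :=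
  stmt9_general n C ζ hfin hupper c₀ lam₀ hc₀ hlam₀ hlower
end

section
/- Let n ≥ 1, N ∈ ℕ and s ∈ ℂ with 2N - 2|Re s| > n. Then the integral ∫_{B} y^{2 Re s + 2N - n - 1} (|x|² + y²)^{-2 Re s} dx dy over the half-ball B = {(x,y) ∈ ℝ^n × (0,1) : |x|² + y² < 1} is finite. -/
/-!
On the half-ball `y² ≤ |x|² + y² ≤ 1`, so `(|x|² + y²)^{-t} ≤ y^{-2t}` for `t ≥ 0` and `≤ 1`
for `t < 0`. Hence the integrand is dominated by `y^{2N - 2|Re s| - n - 1}`, whose exponent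
exceeds `-1`; this is integrable over the cylinder `ball 0 1 × (0,1)` containing the half-ball.
-/

open MeasureTheory Set

theorem Real.rpow_neg_le_rpow_of_sq_le {y r t : ℝ} (hy : 0 < y) (hyr : y ^ 2 ≤ r)
    (hr : r ≤ 1) :
    r ^ (-t) ≤ y ^ (-(t + |t|)) := by
  rcases le_or_gt 0 t with ht | ht
  · calc r ^ (-t) ≤ (y ^ 2) ^ (-t) :=
          Real.rpow_le_rpow_of_nonpos (by positivity) hyr (by linarith)
      _ = y ^ (-(t + |t|)) := by
        rw [← Real.rpow_natCast y 2, ← Real.rpow_mul hy.le, abs_of_nonneg ht]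
        push_cast; ring_nf
  · calc r ^ (-t) ≤ 1 := Real.rpow_le_one ((sq_nonneg y).trans hyr) hr (by linarith)
      _ = y ^ (-(t + |t|)) := by rw [abs_of_neg ht, add_neg_cancel, neg_zero, Real.rpow_zero]

theorem integrableOn_prod_Ioo_snd_rpow {X : Type*} [MeasurableSpace X] (μ : Measure X)
    [SFinite μ] {s : Set X} (hs : μ s ≠ ⊤) {α : ℝ} (hα : -1 < α) :
    IntegrableOn (fun p : X × ℝ => p.2 ^ α) (s ×ˢ Ioo 0 1) (μ.prod volume) := by
  rw [IntegrableOn, ← Measure.prod_restrict]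
  simpa using (integrableOn_const (C := (1 : ℝ)) hs).mul_prod
    ((intervalIntegral.integrableOn_Ioo_rpow_iff zero_lt_one).2 hα)

theorem halfBall_subset_ball_prod_Ioo {E : Type*} [SeminormedAddCommGroup E] :
    {p : E × ℝ | 0 < p.2 ∧ p.2 < 1 ∧ ‖p.1‖ ^ 2 + p.2 ^ 2 < 1} ⊆
      Metric.ball 0 1 ×ˢ Ioo 0 1 := by
  rintro ⟨x, y⟩ ⟨hy0, hy1, hr⟩
  refine ⟨?_, hy0, hy1⟩
  rw [Metric.mem_ball, dist_zero_right]
  nlinarith [norm_nonneg x]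

theorem stmt17_general (n N : ℕ) (s : ℂ)
    (h : (n : ℝ) < 2 * N - 2 * |s.re|) :
    IntegrableOn
      (fun p : EuclideanSpace ℝ (Fin n) × ℝ =>
        p.2 ^ (2 * s.re + 2 * N - n - 1) * (‖p.1‖ ^ 2 + p.2 ^ 2) ^ (-(2 * s.re)))
      {p : EuclideanSpace ℝ (Fin n) × ℝ | 0 < p.2 ∧ p.2 < 1 ∧ ‖p.1‖ ^ 2 + p.2 ^ 2 < 1}
      volume := by
  have hdom : IntegrableOn
      (fun p : EuclideanSpace ℝ (Fin n) × ℝ => p.2 ^ (2 * N - 2 * |s.re| - n - 1 : ℝ))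
      (Metric.ball 0 1 ×ˢ Ioo 0 1) volume := by
    rw [Measure.volume_eq_prod]
    exact integrableOn_prod_Ioo_snd_rpow _ measure_ball_lt_top.ne (by linarith)
  refine (hdom.mono_set halfBall_subset_ball_prod_Ioo).mono'
    (by fun_prop : Measurable _).aestronglyMeasurable.restrict ?_
  filter_upwards [ae_restrict_mem (by measurability)] with ⟨x, y⟩ ⟨hy0, _, hr⟩
  have hyr : y ^ 2 ≤ ‖x‖ ^ 2 + y ^ 2 := le_add_of_nonneg_left (by positivity)
  rw [Real.norm_of_nonneg (by positivity)]
  calc y ^ (2 * s.re + 2 * N - n - 1) * (‖x‖ ^ 2 + y ^ 2) ^ (-(2 * s.re))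
      ≤ y ^ (2 * s.re + 2 * N - n - 1) * y ^ (-(2 * s.re + |2 * s.re|)) := by
        gcongr
        exact Real.rpow_neg_le_rpow_of_sq_le hy0 hyr hr.le
    _ = y ^ (2 * N - 2 * |s.re| - n - 1 : ℝ) := by
        rw [← Real.rpow_add hy0, abs_mul, abs_two]
        ring_nf

/-- For `n ≥ 1`, `N ∈ ℕ` and `s ∈ ℂ` with `2N - 2|Re s| > n`, the integral
`∫_B y^{2Re s + 2N - n - 1} (|x|² + y²)^{-2Re s} dx dy` over the half-ball
`B = {(x,y) : |x|² + y² < 1, 0 < y < 1}` is finite. -/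
theorem stmt17 (n N : ℕ) (hn : 1 ≤ n) (s : ℂ)
    (h : (n : ℝ) < 2 * N - 2 * |s.re|) :
    IntegrableOn
      (fun p : EuclideanSpace ℝ (Fin n) × ℝ =>
        p.2 ^ (2 * s.re + 2 * N - n - 1) * (‖p.1‖ ^ 2 + p.2 ^ 2) ^ (-(2 * s.re)))
      {p : EuclideanSpace ℝ (Fin n) × ℝ | 0 < p.2 ∧ p.2 < 1 ∧ ‖p.1‖ ^ 2 + p.2 ^ 2 < 1}
      volume :=
  stmt17_general n N s h
end
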